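/- arXiv:1010.1286 — 2 statements merged into one kernel-verified Lean document; each statement's English description precedes it below -/
import Mathlib

section
/- For every positive integer n and every choice of letters x₁,…,xₙ ∈ A, the minimum component of the Viterbi state Sⁿ equals the number of indices i ∈ {1,…,n} for which min Sⁱ ≠ min S^{i−1}; that is, min Sⁿ = card({1 ≤ i ≤ n : min Sⁱ ≠ min S^{i−1}}). -/
/-- Hamming distance on the alphabet `A`. -/
def ham {A : Type*} [DecidableEq A] (x y : A) : ℕ := if x = y then 0 else 1

/-- `EdgeChain src dst n e` : the first `n` edges of the edge sequence `e` form a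
directed path in the labelled graph with source map `src` and destination map `dst`. -/
def EdgeChain {V E : Type*} (src dst : E → V) (n : ℕ) (e : ℕ → E) : Prop :=
  ∀ i : ℕ, i + 1 < n → dst (e i) = src (e (i + 1))

/-- The graph is strongly connected: for any ordered pair of vertices there is a
(nonempty) directed path from the first to the second. -/
def StronglyConnected {V E : Type*} (src dst : E → V) : Prop :=
  ∀ u v : V, ∃ (l : List E) (h : l ≠ []),
    List.Chain' (fun e f => dst e = src f) l ∧ src (l.head h) = u ∧ dst (l.getLast h) = v

/-- The Viterbi transition operator `V` : `Vop src dst lab s x v` is the minimum of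
`s (src e) + d(x, lab e)` over all edges `e` ending at `v`. -/
noncomputable def Vop {V E A : Type*} [DecidableEq A] (src dst : E → V) (lab : E → A)
    (s : V → ℕ) (x : A) : V → ℕ :=
  fun v => sInf {m : ℕ | ∃ e : E, dst e = v ∧ m = s (src e) + ham x (lab e)}

/-- Minimum component of a state. -/
noncomputable def minS {V : Type*} (s : V → ℕ) : ℕ := sInf (Set.range s)

/-- The reduced Viterbi transition operator `Ṽ`: subtract from `V(s,x)` its minimum
component. -/
noncomputable def Vred {V E A : Type*} [DecidableEq A] (src dst : E → V) (lab : E → A)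
    (s : V → ℕ) (x : A) : V → ℕ :=
  fun v => Vop src dst lab s x v - minS (Vop src dst lab s x)

/-- The Viterbi state sequence: `S⁰` is the zero state and `Sⁱ = V(S^{i-1}, xᵢ)`
(the letter `xᵢ` of the paper is `x (i-1)` here). -/
noncomputable def VSeq {V E A : Type*} [DecidableEq A] (src dst : E → V) (lab : E → A)
    (x : ℕ → A) : ℕ → V → ℕ
  | 0 => fun _ => 0
  | i + 1 => Vop src dst lab (VSeq src dst lab x i) (x i)

/-- The reduced Viterbi state sequence `S̃ⁱ(v) = Sⁱ(v) - min Sⁱ`. -/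
noncomputable def SredSeq {V E A : Type*} [DecidableEq A] (src dst : E → V) (lab : E → A)
    (x : ℕ → A) (i : ℕ) : V → ℕ :=
  fun v => VSeq src dst lab x i v - minS (VSeq src dst lab x i)

/-- The state space `𝒮_G`: the zero state together with everything obtainable from it
by finitely many applications of the reduced Viterbi transition operator. -/
def SG {V E A : Type*} [DecidableEq A] (src dst : E → V) (lab : E → A) : Set (V → ℕ) :=
  { s | ∃ l : List A, s = l.foldl (Vred src dst lab) (fun _ => 0) }

/-- `PrimIndex src dst k` : `k` is positive and any vertex can be reached from any
vertex by a directed path of length exactly `k`. -/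
def PrimIndex {V E : Type*} (src dst : E → V) (k : ℕ) : Prop :=
  0 < k ∧ ∀ u v : V, ∃ e : ℕ → E,
    EdgeChain src dst k e ∧ src (e 0) = u ∧ dst (e (k - 1)) = v

/-- Minimum total Hamming distortion over all directed paths of length `n`. -/
noncomputable def minDist {V E A : Type*} [DecidableEq A] (src dst : E → V) (lab : E → A)
    (n : ℕ) (x : Fin n → A) : ℕ :=
  sInf {m : ℕ | ∃ e : ℕ → E, EdgeChain src dst n e ∧
    m = ∑ i : Fin n, ham (x i) (lab (e i.1))}

/-- `aSeq src dst lab p n` is the expected minimum path distortion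
`a_n = E[ min_{paths} Σ d(Xᵢ, L(eᵢ)) ]` for the i.i.d. source with letter distribution `p`. -/
noncomputable def aSeq {V E A : Type*} [DecidableEq A] [Fintype A] (src dst : E → V)
    (lab : E → A) (p : A → ℝ) (n : ℕ) : ℝ :=
  ∑ x : Fin n → A, (∏ i, p (x i)) * (minDist src dst lab n x : ℝ)

section Aux

variable {V E A : Type*} [Fintype V] [Nonempty V] [DecidableEq A]
variable (src dst : E → V) (lab : E → A)

lemma exists_incoming (hconn : StronglyConnected src dst) (v : V) :
    ∃ e : E, dst e = v := by
  obtain ⟨l, hl, _, _, hlast⟩ := hconn v v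
  exact ⟨l.getLast hl, hlast⟩

lemma exists_outgoing (hconn : StronglyConnected src dst) (v : V) :
    ∃ e : E, src e = v := by
  obtain ⟨l, hl, _, hhead, _⟩ := hconn v v
  exact ⟨l.head hl, hhead⟩

lemma minS_le (s : V → ℕ) (v : V) : minS s ≤ s v :=
  Nat.sInf_le (Set.mem_range_self v)

lemma minS_le_Vop (hconn : StronglyConnected src dst) (s : V → ℕ) (x : A) (v : V) :
    minS s ≤ Vop src dst lab s x v := by
  obtain ⟨e₀, he₀⟩ := exists_incoming src dst hconn v
  refine le_csInf ⟨s (src e₀) + ham x (lab e₀), e₀, he₀, rfl⟩ ?_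
  rintro m ⟨e, -, rfl⟩
  exact le_trans (minS_le s (src e)) (Nat.le_add_right _ _)

lemma minS_mono (hconn : StronglyConnected src dst) (s : V → ℕ) (x : A) :
    minS s ≤ minS (Vop src dst lab s x) := by
  refine le_csInf (Set.range_nonempty _) ?_
  rintro m ⟨v, rfl⟩
  exact minS_le_Vop src dst lab hconn s x v

lemma minS_Vop_le (hconn : StronglyConnected src dst) (s : V → ℕ) (x : A) :
    minS (Vop src dst lab s x) ≤ minS s + 1 := by
  have hmem : minS s ∈ Set.range s := Nat.sInf_mem (Set.range_nonempty s)
  obtain ⟨v, hv⟩ := hmem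
  obtain ⟨e, he⟩ := exists_outgoing src dst hconn v
  have h1 : Vop src dst lab s x (dst e) ≤ s (src e) + ham x (lab e) :=
    Nat.sInf_le ⟨e, rfl, rfl⟩
  have h2 : ham x (lab e) ≤ 1 := by unfold ham; split <;> omega
  calc minS (Vop src dst lab s x) ≤ Vop src dst lab s x (dst e) :=
        minS_le _ (dst e)
    _ ≤ s (src e) + ham x (lab e) := h1
    _ ≤ minS s + 1 := by rw [he, hv]; omega

end Aux

/-- For every positive `n` and letters `x₁,…,xₙ`,
`min Sⁿ = card({1 ≤ i ≤ n : min Sⁱ ≠ min S^{i-1}})`. -/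
theorem min_viterbi_state_eq_card_jumps
    {V E A : Type*} [Fintype V] [Nonempty V] [Fintype E] [Fintype A] [DecidableEq A]
    (src dst : E → V) (lab : E → A) (hconn : StronglyConnected src dst)
    (n : ℕ) (hn : 0 < n) (x : ℕ → A) :
    minS (VSeq src dst lab x n) =
      ((Finset.range n).filter fun i =>
        minS (VSeq src dst lab x (i + 1)) ≠ minS (VSeq src dst lab x i)).card := by
  set f : ℕ → ℕ := fun i => minS (VSeq src dst lab x i) with hf
  have hstep : ∀ i, f i ≤ f (i + 1) ∧ f (i + 1) ≤ f i + 1 := by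
    intro i
    exact ⟨minS_mono src dst lab hconn _ (x i), minS_Vop_le src dst lab hconn _ (x i)⟩
  have hmono : Monotone f := monotone_nat_of_le_succ fun i => (hstep i).1
  have hf0 : f 0 = 0 := by
    simp only [hf, VSeq, minS]
    exact Nat.le_antisymm (Nat.sInf_le ⟨Classical.arbitrary V, rfl⟩) (Nat.zero_le _)
  have htel : f n = ∑ i ∈ Finset.range n, (f (i + 1) - f i) := by
    rw [Finset.sum_range_tsub hmono, hf0, Nat.sub_zero]
  show f n = _
  rw [htel, Finset.card_filter]
  refine Finset.sum_congr rfl fun i _ => ?_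
  rcases eq_or_ne (f (i + 1)) (f i) with h | h
  · simp only [hf] at h ⊢
    simp [h]
  · have h1 := (hstep i).1
    have h2 := (hstep i).2
    have h3 : f (i + 1) - f i = 1 := by omega
    simp only [hf] at h h3 ⊢
    simp [h3, h]
end

section
/- For the labeled de Bruijn graph G described in the context, the state space 𝒮_G has exactly 107 elements. -/
/-- Source map of the labelled de Bruijn graph of size 8: edge `(v, j)` (for `j = 0, 1`)
is the `j`-th outgoing edge of vertex `v` (vertices `v₁,…,v₈` are `0,…,7`). -/
def dbSrc : Fin 8 × Fin 2 → Fin 8 := fun e => e.1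

/-- Destination map of the de Bruijn graph: edge `(v, j)` goes to vertex `2v + j (mod 8)`,
i.e. `v₁ → v₁,v₂`, `v₂ → v₃,v₄`, `v₃ → v₅,v₆`, `v₄ → v₇,v₈`, `v₅ → v₁,v₂`,
`v₆ → v₃,v₄`, `v₇ → v₅,v₆`, `v₈ → v₇,v₈`. -/
def dbDst : Fin 8 × Fin 2 → Fin 8 :=
  fun e => ⟨(2 * e.1.1 + e.2.1) % 8, Nat.mod_lt _ (by norm_num)⟩

/-- Labels of the de Bruijn graph: the alphabet `A = {a,b,c,d}` is `Fin 4` with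
`a = 0`, `b = 1`, `c = 2`, `d = 3`; row `v` lists the labels of the two outgoing
edges of vertex `v`. -/
def dbLab : Fin 8 × Fin 2 → Fin 4 :=
  fun e => ![![0, 1], ![1, 0], ![2, 3], ![3, 2], ![1, 0], ![0, 1], ![3, 2], ![2, 3]] e.1 e.2



def tbl : List (List Nat) := [[0,0,0,0,0,0,0,0],[0,0,0,0,1,1,1,1],[1,1,1,1,0,0,0,0],[0,1,1,0,1,1,1,1],[1,0,0,1,1,1,1,1],[1,1,1,1,0,1,1,0],[1,1,1,1,1,0,0,1],[0,1,1,1,2,2,1,1],[1,0,1,1,2,2,1,1],[1,1,2,2,1,1,1,0],[1,1,2,2,1,1,0,1],[1,1,1,0,1,1,2,2],[1,1,0,1,1,1,2,2],[2,2,1,1,0,1,1,1],[2,2,1,1,1,0,1,1],[0,1,2,1,2,2,2,2],[1,0,1,2,2,2,2,2],[0,0,1,1,0,0,0,0],[1,2,1,0,2,2,2,2],[2,1,0,1,2,2,2,2],[1,1,0,0,0,0,0,0],[0,0,0,0,1,1,0,0],[2,2,2,2,2,1,0,1],[2,2,2,2,1,2,1,0],[0,0,0,0,0,0,1,1],[2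,2,2,2,1,0,1,2],[2,2,2,2,0,1,2,1],[0,1,2,1,3,3,2,2],[1,0,1,2,3,3,2,2],[0,0,1,1,1,1,1,0],[0,0,1,1,1,1,0,1],[1,2,1,0,2,2,3,3],[2,1,0,1,2,2,3,3],[1,1,0,0,0,1,1,1],[1,1,0,0,1,0,1,1],[0,1,1,1,1,1,0,0],[1,0,1,1,1,1,0,0],[2,2,3,3,1,2,1,0],[2,2,3,3,2,1,0,1],[1,1,1,0,0,0,1,1],[1,1,0,1,0,0,1,1],[3,3,2,2,0,1,2,1],[3,3,2,2,1,0,1,2],[0,1,1,0,2,2,1,1],[1,0,0,1,2,2,1,1],[1,1,1,1,1,1,0,1],[1,1,1,1,1,1,1,0],[0,1,1,0,1,1,2,2],[1,0,0,1,1,1,2,2],[1,1,1,1,1,0,1,1],[1,1,1,1,0,1,1,1],[1,0,1,1,1,1,1,1],[0,1,1,1,1,1,1,1],[1,1,2,2,0,1,1,0],[1,1,2,2,1,0,0,1],[1,1,0,1,1,1,1,1],[1,1,1,0,1,1,1,1],[2,2,1,1,0,1,1,0],[2,2,1,1,1,0,0,1],[0,1,2,1,2,2,1,1],[1,0,1,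2,2,2,1,1],[1,2,1,0,1,1,2,2],[2,1,0,1,1,1,2,2],[2,2,2,2,1,0,1,1],[2,2,2,2,0,1,1,1],[2,2,2,2,1,1,0,1],[2,2,2,2,1,1,1,0],[1,1,2,2,1,2,1,0],[1,1,2,2,2,1,0,1],[2,2,1,1,0,1,2,1],[2,2,1,1,1,0,1,2],[1,1,0,1,2,2,2,2],[1,1,1,0,2,2,2,2],[1,0,1,1,2,2,2,2],[0,1,1,1,2,2,2,2],[0,0,1,1,1,0,0,0],[0,0,1,1,0,1,0,0],[1,1,0,0,0,0,0,1],[1,1,0,0,0,0,1,0],[0,0,0,1,1,1,0,0],[0,0,1,0,1,1,0,0],[1,0,0,0,0,0,1,1],[0,1,0,0,0,0,1,1],[1,1,0,0,1,0,0,1],[1,1,0,0,0,1,1,0],[0,0,1,1,1,0,0,1],[0,0,1,1,0,1,1,0],[1,0,0,1,0,0,1,1],[0,1,1,0,0,0,1,1],[1,0,0,1,1,1,0,0],[0,1,1,0,1,1,0,0],[0,1,0,0,1,1,1,1],[1,0,0,0,1,1,1,1],[0,0,1,0,1,1,1,1],[0,0,0,1,1,1,1,1],[1,1,1,1,0,0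,1,0],[1,1,1,1,0,0,0,1],[1,1,1,1,0,1,0,0],[1,1,1,1,1,0,0,0],[2,2,1,1,0,0,1,0],[2,2,1,1,0,0,0,1],[1,1,2,2,0,1,0,0],[1,1,2,2,1,0,0,0],[0,1,0,0,1,1,2,2],[1,0,0,0,1,1,2,2],[0,0,1,0,2,2,1,1],[0,0,0,1,2,2,1,1]]
def trt : List (List Nat) := [[1,1,2,2],[3,4,5,6],[4,3,6,5],[7,8,9,10],[11,12,13,14],[8,7,10,9],[12,11,14,13],[15,16,17,17],[18,19,20,20],[21,21,22,23],[24,24,25,26],[21,21,23,22],[24,24,26,25],[16,15,17,17],[19,18,20,20],[27,28,29,30],[31,32,33,34],[1,1,6,5],[35,36,37,38],[39,40,41,42],[4,3,2,2],[3,4,2,2],[40,39,42,41],[36,35,38,37],[1,1,5,6],[32,31,34,33],[28,27,30,29],[27,28,29,30],[31,32,33,34],[43,44,45,46],[47,48,49,50],[35,36,37,38],[39,40,41,42],[51,52,53,54],[55,56,57,58],[52,51,54,53],[56,55,58,57],[36,35,38,37],[40,39,42,41],[44,43,46,45],[48,47,50,49],[28,27,30,29],[32,31,34,33],[59,60,9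,10],[61,62,13,14],[24,24,63,64],[21,21,65,66],[7,8,67,68],[11,12,69,70],[71,72,20,20],[73,74,17,17],[72,71,20,20],[74,73,17,17],[8,7,68,67],[12,11,70,69],[24,24,64,63],[21,21,66,65],[60,59,10,9],[62,61,14,13],[15,16,75,76],[18,19,77,78],[79,80,23,22],[81,82,26,25],[19,18,83,84],[16,15,85,86],[87,88,25,26],[89,90,22,23],[80,79,22,23],[82,81,25,26],[16,15,76,75],[19,18,78,77],[88,87,26,25],[90,89,23,22],[18,19,84,83],[15,16,86,85],[91,92,6,5],[93,94,6,5],[4,3,95,96],[4,3,97,98],[3,4,96,95],[3,4,98,97],[92,91,5,6],[94,93,5,6],[55,56,99,100],[51,52,101,102],[103,104,49,50],[105,106,45,46],[104,103,50,49],[106,105,46,45],[56,55,100,99],[52,51,102,101],[52,51,53,54],[56,55,57,58],[43,44,46,45],[47,48,50,49],[44,43,45,46],[48,47,49,50],[51,52,54,53],[55,56,58,57],[44,43,45,46],[48,47,49,50],[51,52,54,53],[55,56,58,57],[52,51,53,54],[56,55,57,58],[43,44,46,45],[47,48,50,49]]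
def prt : List (Nat × Nat) := [(0,0),(0,0),(0,2),(1,0),(1,1),(1,2),(1,3),(3,0),(3,1),(3,2),(3,3),(4,0),(4,1),(4,2),(4,3),(7,0),(7,1),(7,2),(8,0),(8,1),(8,2),(9,0),(9,2),(9,3),(10,0),(10,2),(10,3),(15,0),(15,1),(15,2),(15,3),(16,0),(16,1),(16,2),(16,3),(18,0),(18,1),(18,2),(18,3),(19,0),(19,1),(19,2),(19,3),(29,0),(29,1),(29,2),(29,3),(30,0),(30,1),(30,2),(30,3),(33,0),(33,1),(33,2),(33,3),(34,0),(34,1),(34,2),(34,3),(43,0),(43,1),(44,0),(44,1),(45,2),(45,3),(46,2),(46,3),(47,2),(47,3),(48,2),(48,3),(49,0),(49,1),(50,0),(50,1),(59,2),(59,3),(60,2),(60,3),(61,0),(61,1),(62,0),(62,1),(63,2),(63,3),(64,2),(64,3),(65,0),(65,1),(66,0),(66,1),(75,0),(75,1),(76,0),(76,1),(77,2),(77,3),(78,2),(78,3),(83,2),(83,3),(84,2),(84,3),(85,0),(85,1),(86,0),(86,1)]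

namespace DB107

def st (i : Fin 107) : Fin 8 → ℕ := fun v => (tbl.getD i.1 []).getD v.1 0
def e1 (v : Fin 8) : Fin 8 × Fin 2 := (⟨v.1/2, by have := v.2; omega⟩, ⟨v.1%2, by omega⟩)
def e2 (v : Fin 8) : Fin 8 × Fin 2 := (⟨v.1/2+4, by have := v.2; omega⟩, ⟨v.1%2, by omega⟩)
def Vc (s : Fin 8 → ℕ) (x : Fin 4) : Fin 8 → ℕ := fun v =>
  min (s (e1 v).1 + ham x (dbLab (e1 v))) (s (e2 v).1 + ham x (dbLab (e2 v)))
def mV (s : Fin 8 → ℕ) : ℕ :=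
  min (s ⟨0, by norm_num⟩) (min (s ⟨1, by norm_num⟩) (min (s ⟨2, by norm_num⟩)
    (min (s ⟨3, by norm_num⟩) (min (s ⟨4, by norm_num⟩) (min (s ⟨5, by norm_num⟩)
    (min (s ⟨6, by norm_num⟩) (s ⟨7, by norm_num⟩)))))))
def VcRed (s : Fin 8 → ℕ) (x : Fin 4) : Fin 8 → ℕ := fun v => Vc s x v - mV (Vc s x)
def tr (i : Fin 107) (x : Fin 4) : Fin 107 :=
  ⟨(trt.getD i.1 []).getD x.1 0 % 107, Nat.mod_lt _ (by norm_num)⟩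
def pr (i : Fin 107) : Fin 107 := ⟨(prt.getD i.1 (0,0)).1 % 107, Nat.mod_lt _ (by norm_num)⟩
def lx (i : Fin 107) : Fin 4 := ⟨(prt.getD i.1 (0,0)).2 % 4, Nat.mod_lt _ (by norm_num)⟩

set_option maxRecDepth 100000 in
lemma closkey : ∀ (i : Fin 107) (x : Fin 4) (v : Fin 8),
    VcRed (st i) x v = st (tr i x) v := by decide

set_option maxRecDepth 100000 in
lemma parkey : ∀ i : Fin 107, 0 < i.1 → (pr i).1 < i.1 ∧ tr (pr i) (lx i) = i := by decide

set_option maxRecDepth 1000000 in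
lemma stInj : ∀ i j : Fin 107, (∀ v, st i v = st j v) → i = j := by decide

lemma st0 : st ⟨0, by norm_num⟩ = fun _ => 0 := by funext v; fin_cases v <;> rfl

lemma edges_to : ∀ (v : Fin 8) (e : Fin 8 × Fin 2), dbDst e = v ↔ e = e1 v ∨ e = e2 v := by
  decide

lemma sInf_pair_nat (a b : ℕ) : sInf ({a, b} : Set ℕ) = min a b := by
  apply le_antisymm
  · rcases le_total a b with h | h
    · rw [min_eq_left h]; exact Nat.sInf_le (by simp)
    · rw [min_eq_right h]; exact Nat.sInf_le (by simp)
  · apply le_csInf ⟨a, by simp⟩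
    intro m hm
    rcases hm with rfl | hm
    · exact min_le_left _ _
    · rw [Set.mem_singleton_iff] at hm; subst hm; exact min_le_right _ _

lemma Vop_eq (s : Fin 8 → ℕ) (x : Fin 4) : Vop dbSrc dbDst dbLab s x = Vc s x := by
  funext v
  have hset : {m : ℕ | ∃ e : Fin 8 × Fin 2, dbDst e = v ∧ m = s (dbSrc e) + ham x (dbLab e)}
      = {s (dbSrc (e1 v)) + ham x (dbLab (e1 v)), s (dbSrc (e2 v)) + ham x (dbLab (e2 v))} := by
    ext m
    constructor
    · rintro ⟨e, he, rfl⟩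
      rcases (edges_to v e).1 he with rfl | rfl
      · exact Or.inl rfl
      · exact Or.inr rfl
    · rintro (rfl | h)
      · exact ⟨e1 v, (edges_to v _).2 (Or.inl rfl), rfl⟩
      · rw [Set.mem_singleton_iff] at h; subst h
        exact ⟨e2 v, (edges_to v _).2 (Or.inr rfl), rfl⟩
  simp only [Vop, hset, sInf_pair_nat]
  rfl

lemma minS_eq (s : Fin 8 → ℕ) : minS s = mV s := by
  apply le_antisymm
  · have h : ∀ v : Fin 8, minS s ≤ s v := fun v => Nat.sInf_le ⟨v, rfl⟩
    simp only [mV, le_min_iff]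
    exact ⟨h _, h _, h _, h _, h _, h _, h _, h _⟩
  · obtain ⟨v, hv⟩ := Nat.sInf_mem (Set.range_nonempty s)
    have h2 : mV s ≤ s v := by
      obtain ⟨k, hk⟩ := v
      interval_cases k <;> simp only [mV] <;> omega
    rw [hv] at h2
    exact h2

lemma Vred_eq : Vred dbSrc dbDst dbLab = VcRed := by
  funext s x v
  simp only [Vred, VcRed, Vop_eq, minS_eq]

lemma fold_mem : ∀ (l : List (Fin 4)) (i : Fin 107),
    ∃ j, l.foldl (Vred dbSrc dbDst dbLab) (st i) = st j := by
  intro l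
  induction l with
  | nil => intro i; exact ⟨i, rfl⟩
  | cons x l ih =>
    intro i
    have h1 : Vred dbSrc dbDst dbLab (st i) x = st (tr i x) := by
      rw [Vred_eq]; funext v; exact closkey i x v
    simpa only [List.foldl_cons, h1] using ih (tr i x)

lemma reach : ∀ (n : ℕ) (i : Fin 107), i.1 ≤ n →
    ∃ l : List (Fin 4), st i = l.foldl (Vred dbSrc dbDst dbLab) (fun _ => 0) := by
  intro n
  induction n with
  | zero =>
    intro i hi
    have h : i = ⟨0, by norm_num⟩ := Fin.ext (show i.1 = 0 by omega)
    exact ⟨[], by rw [h, st0]; rfl⟩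
  | succ n ih =>
    intro i hi
    by_cases h0 : i.1 = 0
    · have h : i = ⟨0, by norm_num⟩ := Fin.ext (show i.1 = 0 by omega)
      exact ⟨[], by rw [h, st0]; rfl⟩
    · obtain ⟨hlt, htr⟩ := parkey i (Nat.pos_of_ne_zero h0)
      obtain ⟨l, hl⟩ := ih (pr i) (by omega)
      refine ⟨l ++ [lx i], ?_⟩
      rw [List.foldl_append, List.foldl_cons, List.foldl_nil, ← hl, Vred_eq]
      funext v
      rw [closkey, htr]

lemma SG_eq_range : SG dbSrc dbDst dbLab = Set.range st := by
  ext s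
  constructor
  · rintro ⟨l, rfl⟩
    obtain ⟨j, hj⟩ := fold_mem l ⟨0, by norm_num⟩
    rw [st0] at hj
    exact ⟨j, hj.symm⟩
  · rintro ⟨i, rfl⟩
    obtain ⟨l, hl⟩ := reach i.1 i le_rfl
    exact ⟨l, hl⟩

end DB107

/-- For the labelled de Bruijn graph of size 8, the state space `𝒮_G`
has exactly 107 elements. -/
theorem deBruijn_stateSpace_card_eq_107 :
    (SG dbSrc dbDst dbLab).ncard = 107 := by
  rw [DB107.SG_eq_range]
  have hinj : Function.Injective DB107.st := fun i j h => DB107.stInj i j (congrFun h)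
  rw [← Set.image_univ, Set.ncard_image_of_injective _ hinj, Set.ncard_univ]
  simp [Nat.card_eq_fintype_card]
end
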